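/- Let b ∈ (0,1), α ∈ (0,2), β = α - 1 + 1/b, and let Γ = {(x₁,x₂) ∈ ℝ² : |x₂| ≥ |x₁|^b or |x₁| ≥ |x₂|^b}. Define k(z) = (2-α)·1_{Γ ∩ B₁}(z)·|z|^{-2-β}. Then for every 0 < r < 1, ∫_{B_r} |z|² k(z) dz ≤ 8 r^{2-α}. -/

import Mathlib

/-!
Split the thorn according to which coordinate is larger in absolute value. For a point
`(x, y)` of the unit ball with `|y| ≤ |x|`, the alternative `|y| ≥ |x|^b` only holds at the
origin (as `|x| < |x|^b` for `0 < |x| < 1`), so that half of the thorn lies in the cusp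
`|y| ≤ |x|^{1/b}`, where `|z|² k(z) = (2-α) |z|^{-β} ≤ (2-α) |x|^{-β}`. Integrating first in `y`
over a fibre of length `2 |x|^{1/b}` leaves `∫_{-r}^{r} 2 (2-α) |x|^{1-α} dx = 4 r^{2-α}`; the
other half of the thorn is the mirror image and contributes the same.
-/

open MeasureTheory Metric Set
open scoped ENNReal

def cusp (γ r : ℝ) : Set (ℝ × ℝ) := {p | |p.1| < r ∧ |p.2| ≤ |p.1| ^ γ}

theorem measurableSet_cusp (γ r : ℝ) : MeasurableSet (cusp γ r) := by
  unfold cusp; measurability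

theorem lintegral_Ioo_rpow {q r : ℝ} (hq : -1 < q) (hr : 0 < r) :
    ∫⁻ x in Ioo 0 r, ENNReal.ofReal (x ^ q) = ENNReal.ofReal (r ^ (q + 1) / (q + 1)) := by
  rw [← ofReal_integral_eq_lintegral_ofReal ((intervalIntegral.integrableOn_Ioo_rpow_iff hr).2 hq)
      ((ae_restrict_mem measurableSet_Ioo).mono fun x hx => Real.rpow_nonneg hx.1.le q),
    ← integral_Ioc_eq_integral_Ioo, ← intervalIntegral.integral_of_le hr.le,
    integral_rpow (Or.inl hq), Real.zero_rpow (by linarith), sub_zero]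

theorem lintegral_Ioo_neg_comp_abs (f : ℝ → ℝ≥0∞) {r : ℝ} (hr : 0 < r) :
    ∫⁻ x in Ioo (-r) r, f |x| = 2 * ∫⁻ x in Ioo 0 r, f x := by
  have hpos : ∫⁻ x in Ioo 0 r, f |x| = ∫⁻ x in Ioo 0 r, f x :=
    setLIntegral_congr_fun measurableSet_Ioo fun x hx => by rw [abs_of_pos hx.1]
  have hneg : ∫⁻ x in Ioo (-r) 0, f |x| = ∫⁻ x in Ioo 0 r, f |x| := by
    rw [← (Measure.measurePreserving_neg volume).setLIntegral_comp_preimage_emb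
      (MeasurableEquiv.neg ℝ).measurableEmbedding, neg_preimage, neg_Ioo, neg_zero, neg_neg]
    simp only [abs_neg]
  rw [← Ioo_union_Ico_eq_Ioo (neg_neg_of_pos hr) hr.le,
    lintegral_union measurableSet_Ico
      ((Iio_disjoint_Ici le_rfl).mono Ioo_subset_Iio_self Ico_subset_Ici_self),
    setLIntegral_congr Ioo_ae_eq_Ico.symm, hneg, hpos, two_mul]

theorem lintegral_indicator_cusp_slice_le {γ q r c : ℝ} (hγ : 0 < γ) (hc : 0 ≤ c) (x : ℝ) :
    ∫⁻ y, (cusp γ r).indicator (fun p => ENNReal.ofReal (c * |p.1| ^ q)) (x, y) ≤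
      (Ioo (-r) r).indicator (fun x => ENNReal.ofReal (2 * c * |x| ^ (q + γ))) x := by
  by_cases hx : |x| < r
  · have hslice :
        (fun y => (cusp γ r).indicator (fun p => ENNReal.ofReal (c * |p.1| ^ q)) (x, y)) =
          (Icc (-(|x| ^ γ)) (|x| ^ γ)).indicator fun _ => ENNReal.ofReal (c * |x| ^ q) := by
      ext y
      simp [indicator, cusp, hx, abs_le]
    rw [hslice, lintegral_indicator_const measurableSet_Icc, Real.volume_Icc, sub_neg_eq_add,
      indicator_of_mem (show x ∈ Ioo (-r) r from abs_lt.1 hx),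
      ← ENNReal.ofReal_mul' (by positivity)]
    apply ENNReal.ofReal_le_ofReal
    rcases eq_or_ne x 0 with rfl | hx0
    · simp only [abs_zero, Real.zero_rpow hγ.ne', add_zero, mul_zero]
      positivity
    · rw [Real.rpow_add (abs_pos.2 hx0)]
      exact le_of_eq (by ring)
  · simp [indicator, cusp, hx]

theorem setLIntegral_cusp_le {γ q r c : ℝ} (hγ : 0 < γ) (hq : -1 < q + γ) (hr : 0 < r)
    (hc : 0 ≤ c) :
    ∫⁻ p in cusp γ r, ENNReal.ofReal (c * |p.1| ^ q) ≤
      ENNReal.ofReal (4 * c * r ^ (q + γ + 1) / (q + γ + 1)) := by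
  calc ∫⁻ p in cusp γ r, ENNReal.ofReal (c * |p.1| ^ q)
      = ∫⁻ x, ∫⁻ y, (cusp γ r).indicator (fun p => ENNReal.ofReal (c * |p.1| ^ q)) (x, y) := by
        rw [← lintegral_indicator (measurableSet_cusp γ r), Measure.volume_eq_prod,
          lintegral_prod _
            ((Measurable.indicator (by fun_prop) (measurableSet_cusp γ r)).aemeasurable)]
    _ ≤ ∫⁻ x in Ioo (-r) r, ENNReal.ofReal (2 * c * |x| ^ (q + γ)) := by
        rw [← lintegral_indicator measurableSet_Ioo]
        exact lintegral_mono (lintegral_indicator_cusp_slice_le hγ hc)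
    _ = 2 * ENNReal.ofReal (2 * c * (r ^ (q + γ + 1) / (q + γ + 1))) := by
        rw [lintegral_Ioo_neg_comp_abs (fun t => ENNReal.ofReal (2 * c * t ^ (q + γ))) hr]
        simp_rw [ENNReal.ofReal_mul (by positivity : 0 ≤ 2 * c)]
        rw [lintegral_const_mul' _ _ ENNReal.ofReal_ne_top, lintegral_Ioo_rpow hq hr]
    _ = ENNReal.ofReal (4 * c * r ^ (q + γ + 1) / (q + γ + 1)) := by
        rw [← ENNReal.ofReal_ofNat 2, ← ENNReal.ofReal_mul zero_le_two]
        ring_nf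

theorem le_rpow_one_div_of_rpow_le_or_rpow_le {b s t : ℝ} (hb : b ∈ Ioo 0 1) (ht : 0 ≤ t)
    (hts : t ≤ s) (hs1 : s < 1) (h : s ^ b ≤ t ∨ t ^ b ≤ s) : t ≤ s ^ (1 / b) := by
  rcases h with h | h
  · rcases (ht.trans hts).eq_or_lt with hs0 | hs0
    · exact hts.trans (hs0 ▸ Real.rpow_nonneg le_rfl _)
    · exact absurd (h.trans hts) (Real.self_lt_rpow_of_lt_one hs0 hs1 hb.2).not_ge
  · rwa [one_div, Real.le_rpow_inv_iff_of_pos ht (ht.trans hts) hb.1]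

theorem sq_mul_rpow_le_rpow {β c n x : ℝ} (hβ : 0 ≤ β) (hc : 0 ≤ c) (hx : 0 < |x|)
    (hxn : |x| ≤ n) : n ^ 2 * (c * n ^ (-2 - β)) ≤ c * |x| ^ (-β) := by
  have hn : 0 < n := hx.trans_le hxn
  calc n ^ 2 * (c * n ^ (-2 - β)) = c * n ^ (-β) := by
        rw [mul_left_comm, ← Real.rpow_two, ← Real.rpow_add hn]; ring_nf
    _ ≤ c * |x| ^ (-β) :=
        mul_le_mul_of_nonneg_left (Real.rpow_le_rpow_of_nonpos hx hxn (neg_nonpos.2 hβ)) hc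

theorem ofReal_sq_mul_rpow_le_indicator_cusp {b β c r n x y : ℝ} (hb : b ∈ Ioo 0 1) (hβ : 0 ≤ β)
    (hc : 0 ≤ c) (hn : n ^ 2 = x ^ 2 + y ^ 2) (hn0 : 0 ≤ n) (hnr : n < r) (hn1 : n < 1)
    (hyx : |y| ≤ |x|) (hΓ : |y| ≥ |x| ^ b ∨ |x| ≥ |y| ^ b) :
    ENNReal.ofReal (n ^ 2 * (c * n ^ (-2 - β))) ≤
      (cusp (1 / b) r).indicator (fun p => ENNReal.ofReal (c * |p.1| ^ (-β))) (x, y) := by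
  rcases hn0.eq_or_lt with rfl | hn0
  · simp
  have hxn : |x| ≤ n := abs_le_of_sq_le_sq (by nlinarith) hn0.le
  have hx : 0 < |x| := by
    refine abs_pos.2 fun hx0 => hn0.ne' ?_
    rw [hx0, abs_zero, abs_nonpos_iff] at hyx
    simpa [hx0, hyx] using hn
  have hmem : (x, y) ∈ cusp (1 / b) r :=
    ⟨hxn.trans_lt hnr,
      le_rpow_one_div_of_rpow_le_or_rpow_le hb (abs_nonneg y) hyx (hxn.trans_lt hn1) hΓ⟩
  rw [indicator_of_mem hmem]
  exact ENNReal.ofReal_le_ofReal (sq_mul_rpow_le_rpow hβ hc hx hxn)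

theorem lintegral_euclideanSpace_fin_two (f : ℝ × ℝ → ℝ≥0∞) :
    ∫⁻ z : EuclideanSpace ℝ (Fin 2), f (z 0, z 1) = ∫⁻ p, f p :=
  ((volume_preserving_finTwoArrow ℝ).comp (PiLp.volume_preserving_ofLp (Fin 2))).lintegral_comp_emb
    ((MeasurableEquiv.toLp 2 (Fin 2 → ℝ)).symm.trans
      MeasurableEquiv.finTwoArrow).measurableEmbedding f

def thorn (b : ℝ) : Set (EuclideanSpace ℝ (Fin 2)) := {x | |x 1| ≥ |x 0| ^ b ∨ |x 0| ≥ |x 1| ^ b}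

theorem ofReal_sq_mul_indicator_thorn_le {b β c r : ℝ} (hb : b ∈ Ioo 0 1) (hβ : 0 ≤ β)
    (hc : 0 ≤ c) {z : EuclideanSpace ℝ (Fin 2)} (hz : ‖z‖ < r) :
    ENNReal.ofReal (‖z‖ ^ 2 * (thorn b ∩ ball 0 1).indicator (fun w => c * ‖w‖ ^ (-2 - β)) z) ≤
      (cusp (1 / b) r).indicator (fun p => ENNReal.ofReal (c * |p.1| ^ (-β))) (z 0, z 1) +
        (cusp (1 / b) r).indicator (fun p => ENNReal.ofReal (c * |p.1| ^ (-β))) (z 1, z 0) := by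
  by_cases hmem : z ∈ thorn b ∩ ball 0 1
  · rw [indicator_of_mem hmem]
    have hn : ‖z‖ ^ 2 = z 0 ^ 2 + z 1 ^ 2 := by
      simp [EuclideanSpace.real_norm_sq_eq, Fin.sum_univ_two]
    have hn1 := mem_ball_zero_iff.1 hmem.2
    rcases le_total |z 1| |z 0| with h | h
    · exact (ofReal_sq_mul_rpow_le_indicator_cusp hb hβ hc hn (norm_nonneg z) hz hn1 h
        hmem.1).trans le_self_add
    · exact (ofReal_sq_mul_rpow_le_indicator_cusp hb hβ hc (hn.trans (add_comm _ _))
        (norm_nonneg z) hz hn1 h hmem.1.symm).trans le_add_self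
  · simp [indicator_of_notMem hmem]

theorem stmt_15 (b α β : ℝ) (hb : b ∈ Set.Ioo (0 : ℝ) 1) (hα : α ∈ Set.Ioo (0 : ℝ) 2)
    (hβ : β = α - 1 + 1 / b) :
    ∀ r : ℝ, 0 < r → r < 1 →
      ∫⁻ z in ball (0 : EuclideanSpace ℝ (Fin 2)) r,
        ENNReal.ofReal (‖z‖ ^ 2 *
          ({x : EuclideanSpace ℝ (Fin 2) | |x 1| ≥ |x 0| ^ b ∨ |x 0| ≥ |x 1| ^ b} ∩
            ball (0 : EuclideanSpace ℝ (Fin 2)) 1).indicator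
              (fun w => (2 - α) * ‖w‖ ^ (-2 - β)) z) ∂volume ≤
        ENNReal.ofReal (8 * r ^ (2 - α)) := by
  intro r hr _
  have hβ0 : 0 ≤ β := by linarith [one_lt_one_div hb.1 hb.2, hα.1]
  have h2α : 0 < 2 - α := by linarith [hα.2]
  set G : ℝ × ℝ → ℝ≥0∞ :=
    (cusp (1 / b) r).indicator fun p => ENNReal.ofReal ((2 - α) * |p.1| ^ (-β)) with hG
  calc _ ≤ ∫⁻ z in ball (0 : EuclideanSpace ℝ (Fin 2)) r, G (z 0, z 1) + G (z 1, z 0) :=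
        setLIntegral_mono' measurableSet_ball fun z hz =>
          ofReal_sq_mul_indicator_thorn_le hb hβ0 h2α.le (mem_ball_zero_iff.1 hz)
    _ ≤ ∫⁻ z : EuclideanSpace ℝ (Fin 2), G (z 0, z 1) + G (z 1, z 0) :=
        setLIntegral_le_lintegral _ _
    _ = ∫⁻ p, G p + G p.swap := lintegral_euclideanSpace_fin_two fun p => G p + G p.swap
    _ = 2 * ∫⁻ p in cusp (1 / b) r, ENNReal.ofReal ((2 - α) * |p.1| ^ (-β)) := by
        rw [lintegral_add_left (Measurable.indicator (by fun_prop) (measurableSet_cusp _ _)),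
          Measure.volume_eq_prod, lintegral_prod_swap, two_mul, hG,
          lintegral_indicator (measurableSet_cusp _ _)]
    _ ≤ 2 * ENNReal.ofReal (4 * (2 - α) * r ^ (-β + 1 / b + 1) / (-β + 1 / b + 1)) := by
        gcongr
        exact setLIntegral_cusp_le (one_div_pos.2 hb.1) (by linarith) hr h2α.le
    _ = ENNReal.ofReal (8 * r ^ (2 - α)) := by
        rw [show -β + 1 / b + 1 = 2 - α by rw [hβ]; ring, ← ENNReal.ofReal_ofNat 2,
          ← ENNReal.ofReal_mul zero_le_two]
        congr 1
        field_simp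
        ring
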